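/- arXiv:2108.03098 — 7 statements merged into one kernel-verified Lean document; each statement's English description precedes it below -/
import Mathlib

section
/- Let $\alpha, \varepsilon \geq 0$ and let $(a_j)_{j=1}^p$ be a non-increasing real sequence and $(d_j)_{j=1}^p$ a non-decreasing real sequence such that $a_j - a_{j+1} \geq \alpha (d_{j+1} - d_j) - \varepsilon$ for all $j = 1, \ldots, p-1$. Then for any permutation $\sigma$ of $\{1,\ldots,p\}$, we have $\sum_{j=1}^p a_j (d_{\sigma(j)} - d_j) \geq \frac{\alpha}{2} \sum_{j=1}^p (d_j - d_{\sigma(j)})^2 - \varepsilon \sum_{j=1}^p j (d_j - d_{\sigma(j)})$. -/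
open Finset

/-- Cornerstone rearrangement-type lemma (Lemma A.1 of the paper). -/
theorem stmt0 (p : ℕ) (α ε : ℝ) (hα : 0 ≤ α) (hε : 0 ≤ ε)
    (a d : Fin p → ℝ)
    (ha : ∀ i j : Fin p, i ≤ j → a j ≤ a i)
    (hd : Monotone d)
    (hstep : ∀ i : Fin p, ∀ h : (i : ℕ) + 1 < p,
      a i - a ⟨(i : ℕ) + 1, h⟩ ≥ α * (d ⟨(i : ℕ) + 1, h⟩ - d i) - ε)
    (σ : Equiv.Perm (Fin p)) :
    ∑ j, a j * (d (σ j) - d j) ≥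
      α / 2 * ∑ j, (d j - d (σ j)) ^ 2
        - ε * ∑ j : Fin p, ((j.val : ℝ) + 1) * (d j - d (σ j)) := by
  rcases Nat.eq_zero_or_pos p with hp0 | hp
  · subst hp0; simp
  classical
  set aN : ℕ → ℝ := fun i => if h : i < p then a ⟨i, h⟩ else 0 with haN
  set dN : ℕ → ℝ := fun i => if h : i < p then d ⟨i, h⟩ else 0 with hdN
  set bN : ℕ → ℝ := fun i => if h : i < p then d (σ ⟨i, h⟩) - d ⟨i, h⟩ else 0 with hbN
  -- total sum of bN is zero
  have hb0 : ∑ k ∈ range p, bN k = 0 := by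
    rw [← Fin.sum_univ_eq_sum_range]
    have h1 : ∀ j : Fin p, bN ↑j = d (σ j) - d j := fun j => by simp [hbN, j.isLt]
    simp_rw [h1, Finset.sum_sub_distrib, Equiv.sum_comp σ d, sub_self]
  -- partial sums of bN are nonnegative
  have hS0 : ∀ i, i < p → 0 ≤ ∑ k ∈ range (i + 1), bN k := by
    intro i hi
    set n := i + 1 with hn'
    have hn : n ≤ p := hi
    have hn1 : 1 ≤ n := by omega
    set A : Finset (Fin p) := univ.filter (fun k : Fin p => (k : ℕ) < n) with hA
    set B : Finset (Fin p) := A.image σ with hB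
    have hAsum : ∑ k ∈ range n, bN k = ∑ k ∈ B, d k - ∑ k ∈ A, d k := by
      have h1 : ∑ k ∈ range n, bN k = ∑ k ∈ range p, (if k < n then bN k else 0) := by
        rw [← Finset.sum_subset (range_subset_range.2 hn)
          (fun x _ hx => if_neg (fun h => hx (mem_range.2 h)))]
        exact Finset.sum_congr rfl fun k hk => (if_pos (mem_range.1 hk)).symm
      rw [h1, ← Fin.sum_univ_eq_sum_range (fun k => if k < n then bN k else 0) p]
      have h2 : ∀ j : Fin p, (if (j : ℕ) < n then bN ↑j else 0)
          = if (j : ℕ) < n then d (σ j) - d j else 0 := fun j => by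
        split <;> simp [hbN, j.isLt]
      simp_rw [h2]
      rw [← Finset.sum_filter, ← hA, Finset.sum_sub_distrib]
      have h3 : ∑ k ∈ A, d (σ k) = ∑ k ∈ B, d k := by
        rw [hB, Finset.sum_image (fun x _ y _ h => σ.injective h)]
      rw [h3]
    rw [hAsum, sub_nonneg]
    -- compare sums over A and B
    have hcardB : B.card = A.card := Finset.card_image_of_injective _ σ.injective
    have hcard : (A \ B).card = (B \ A).card := by
      have h1 := Finset.card_inter_add_card_sdiff A B
      have h2 := Finset.card_inter_add_card_sdiff B A
      rw [Finset.inter_comm] at h2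
      omega
    have hip : n - 1 < p := by omega
    set v : ℝ := d ⟨n - 1, hip⟩ with hv
    have h1 : ∀ k ∈ A \ B, d k ≤ v := by
      intro k hk
      have hk' : (k : ℕ) < n := by
        have := (Finset.mem_sdiff.1 hk).1
        simpa [hA] using this
      exact hd (by simp only [Fin.le_def]; omega)
    have h2 : ∀ k ∈ B \ A, v ≤ d k := by
      intro k hk
      have hk' : ¬ (k : ℕ) < n := by
        have := (Finset.mem_sdiff.1 hk).2
        simpa [hA] using this
      exact hd (by simp only [Fin.le_def]; omega)
    have e1 : ∑ k ∈ A \ B, d k + ∑ k ∈ A ∩ B, d k = ∑ k ∈ A, d k := by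
      rw [← Finset.sdiff_inter_self_left A B]
      exact Finset.sum_sdiff Finset.inter_subset_left
    have e2 : ∑ k ∈ B \ A, d k + ∑ k ∈ A ∩ B, d k = ∑ k ∈ B, d k := by
      rw [Finset.inter_comm, ← Finset.sdiff_inter_self_left B A]
      exact Finset.sum_sdiff Finset.inter_subset_left
    have i1 : ∑ k ∈ A \ B, d k ≤ (A \ B).card • v := Finset.sum_le_card_nsmul _ _ _ h1
    have i2 : ((B \ A).card) • v ≤ ∑ k ∈ B \ A, d k := Finset.card_nsmul_le_sum _ _ _ h2
    rw [hcard] at i1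
    linarith
  -- LHS as a range sum
  have hLHS : ∑ j : Fin p, a j * (d (σ j) - d j) = ∑ i ∈ range p, aN i * bN i := by
    rw [← Fin.sum_univ_eq_sum_range (fun i => aN i * bN i) p]
    exact Finset.sum_congr rfl fun j _ => by simp [haN, hbN, j.isLt]
  -- Abel summation
  have habel : ∑ i ∈ range p, aN i * bN i
      = ∑ i ∈ range (p - 1), (aN i - aN (i + 1)) * (∑ k ∈ range (i + 1), bN k) := by
    have h := Finset.sum_range_by_parts aN bN p
    simp only [smul_eq_mul] at h
    rw [h, hb0, mul_zero, zero_sub, ← Finset.sum_neg_distrib]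
    exact Finset.sum_congr rfl fun i _ => by ring
  -- pointwise coupling
  have hstepN : ∀ i ∈ range (p - 1), α * (dN (i + 1) - dN i) - ε ≤ aN i - aN (i + 1) := by
    intro i hi
    rw [mem_range] at hi
    have h1 : i < p := by omega
    have h2 : i + 1 < p := by omega
    have := hstep ⟨i, h1⟩ h2
    simpa [haN, hdN, h1, h2] using this
  -- main inequality on coefficients
  have hmain : ∑ i ∈ range (p - 1), (α * (dN (i + 1) - dN i) - ε) * (∑ k ∈ range (i + 1), bN k)
      ≤ ∑ i ∈ range (p - 1), (aN i - aN (i + 1)) * (∑ k ∈ range (i + 1), bN k) := by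
    apply Finset.sum_le_sum
    intro i hi
    have hi' : i < p := by rw [mem_range] at hi; omega
    exact mul_le_mul_of_nonneg_right (hstepN i hi) (hS0 i hi')
  -- expansion
  have hexp : ∑ i ∈ range (p - 1), (α * (dN (i + 1) - dN i) - ε) * (∑ k ∈ range (i + 1), bN k)
      = α * ∑ i ∈ range (p - 1), (dN (i + 1) - dN i) * (∑ k ∈ range (i + 1), bN k)
        - ε * ∑ i ∈ range (p - 1), (∑ k ∈ range (i + 1), bN k) := by
    rw [Finset.mul_sum, Finset.mul_sum, ← Finset.sum_sub_distrib]
    exact Finset.sum_congr rfl fun i _ => by ring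
  -- double-sum swap helper
  have hswap : ∀ g : ℕ → ℕ → ℝ, ∑ i ∈ range (p - 1), ∑ k ∈ range (i + 1), g i k
      = ∑ k ∈ range (p - 1), ∑ i ∈ Ico k (p - 1), g i k := by
    intro g
    simp only [Finset.range_eq_Ico]
    exact (Finset.sum_Ico_Ico_comm 0 (p - 1) (fun i j => g j i)).symm
  -- Identity 1 : quadratic part
  have hI1 : ∑ i ∈ range (p - 1), (dN (i + 1) - dN i) * (∑ k ∈ range (i + 1), bN k)
      = - ∑ k ∈ range p, dN k * bN k := by
    have h1 : ∀ i ∈ range (p - 1), (dN (i + 1) - dN i) * (∑ k ∈ range (i + 1), bN k)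
        = ∑ k ∈ range (i + 1), (dN (i + 1) - dN i) * bN k := fun i _ => Finset.mul_sum _ _ _
    rw [Finset.sum_congr rfl h1, hswap]
    have h2 : ∀ k ∈ range (p - 1), ∑ i ∈ Ico k (p - 1), (dN (i + 1) - dN i) * bN k
        = (dN (p - 1) - dN k) * bN k := by
      intro k hk
      rw [mem_range] at hk
      rw [← Finset.sum_mul]
      congr 1
      rw [Finset.sum_Ico_eq_sub _ (le_of_lt hk), Finset.sum_range_sub dN,
        Finset.sum_range_sub dN]
      ring
    rw [Finset.sum_congr rfl h2]
    have h3 : ∑ k ∈ range (p - 1), (dN (p - 1) - dN k) * bN k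
        = ∑ k ∈ range p, (dN (p - 1) - dN k) * bN k := by
      apply Finset.sum_subset (Finset.range_subset_range.2 (by omega))
      intro x hx hnx
      rw [mem_range] at hx hnx
      have : x = p - 1 := by omega
      simp [this]
    rw [h3]
    have h4 : ∀ k ∈ range p, (dN (p - 1) - dN k) * bN k
        = dN (p - 1) * bN k - dN k * bN k := fun k _ => by ring
    rw [Finset.sum_congr rfl h4, Finset.sum_sub_distrib, ← Finset.mul_sum, hb0, mul_zero,
      zero_sub]
  -- Identity 2 : linear part
  have hI2 : ∑ i ∈ range (p - 1), (∑ k ∈ range (i + 1), bN k)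
      = - ∑ k ∈ range p, ((k : ℝ) + 1) * bN k := by
    rw [hswap (fun _ k => bN k)]
    have h2 : ∀ k ∈ range (p - 1), ∑ _i ∈ Ico k (p - 1), bN k
        = ((p - 1 - k : ℕ) : ℝ) * bN k := by
      intro k hk
      rw [Finset.sum_const, Nat.card_Ico, nsmul_eq_mul]
    rw [Finset.sum_congr rfl h2]
    have h3 : ∑ k ∈ range (p - 1), ((p - 1 - k : ℕ) : ℝ) * bN k
        = ∑ k ∈ range p, ((p - 1 - k : ℕ) : ℝ) * bN k := by
      apply Finset.sum_subset (Finset.range_subset_range.2 (by omega))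
      intro x hx hnx
      rw [mem_range] at hx hnx
      have hx' : p - 1 - x = 0 := by omega
      simp [hx']
    rw [h3]
    have h4 : ∑ k ∈ range p, (((p - 1 - k : ℕ) : ℝ) * bN k + ((k : ℝ) + 1) * bN k)
        = 0 := by
      have h5 : ∀ k ∈ range p, ((p - 1 - k : ℕ) : ℝ) * bN k + ((k : ℝ) + 1) * bN k
          = (p : ℝ) * bN k := by
        intro k hk
        rw [mem_range] at hk
        have hk1 : k ≤ p - 1 := by omega
        have : ((p - 1 - k : ℕ) : ℝ) = (p : ℝ) - 1 - (k : ℝ) := by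
          have := Nat.cast_sub (R := ℝ) hk1
          rw [Nat.cast_sub hk1, Nat.cast_sub (by omega : 1 ≤ p)]
          push_cast
          ring
        rw [this]; ring
      rw [Finset.sum_congr rfl h5, ← Finset.mul_sum, hb0, mul_zero]
    rw [Finset.sum_add_distrib] at h4
    linarith
  -- quadratic identity
  have hsq : ∑ j : Fin p, (d j - d (σ j)) ^ 2 = -2 * ∑ k ∈ range p, dN k * bN k := by
    have hr : ∑ k ∈ range p, dN k * bN k = ∑ j : Fin p, d j * (d (σ j) - d j) := by
      rw [← Fin.sum_univ_eq_sum_range (fun k => dN k * bN k) p]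
      exact Finset.sum_congr rfl fun j _ => by simp [hdN, hbN, j.isLt]
    rw [hr]
    have e1 : ∑ j : Fin p, (d (σ j)) ^ 2 = ∑ j : Fin p, (d j) ^ 2 :=
      Equiv.sum_comp σ (fun j => (d j) ^ 2)
    have key : ∀ j : Fin p, (d j - d (σ j)) ^ 2 + 2 * (d j * (d (σ j) - d j))
        = (d (σ j)) ^ 2 - (d j) ^ 2 := fun j => by ring
    have h0 : ∑ j : Fin p, ((d j - d (σ j)) ^ 2 + 2 * (d j * (d (σ j) - d j))) = 0 := by
      simp_rw [key]
      rw [Finset.sum_sub_distrib, e1, sub_self]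
    rw [Finset.sum_add_distrib, ← Finset.mul_sum] at h0
    linarith
  -- linear identity
  have heps : ∑ j : Fin p, ((j.val : ℝ) + 1) * (d j - d (σ j))
      = - ∑ k ∈ range p, ((k : ℝ) + 1) * bN k := by
    rw [← Fin.sum_univ_eq_sum_range (fun k => ((k : ℝ) + 1) * bN k) p,
      ← Finset.sum_neg_distrib]
    refine Finset.sum_congr rfl fun j _ => ?_
    have : bN ↑j = d (σ j) - d j := by simp [hbN, j.isLt]
    rw [this]; ring
  -- assemble
  rw [ge_iff_le, hLHS, habel]
  calc α / 2 * ∑ j : Fin p, (d j - d (σ j)) ^ 2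
        - ε * ∑ j : Fin p, ((j.val : ℝ) + 1) * (d j - d (σ j))
      = α * ∑ i ∈ range (p - 1), (dN (i + 1) - dN i) * (∑ k ∈ range (i + 1), bN k)
        - ε * ∑ i ∈ range (p - 1), (∑ k ∈ range (i + 1), bN k) := by
        rw [hsq, heps, hI1, hI2]; ring
    _ = ∑ i ∈ range (p - 1), (α * (dN (i + 1) - dN i) - ε) * (∑ k ∈ range (i + 1), bN k) :=
        hexp.symm
    _ ≤ ∑ i ∈ range (p - 1), (aN i - aN (i + 1)) * (∑ k ∈ range (i + 1), bN k) := hmain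
end

section
/- Let $Z, Z' \in \mathbb{R}^{2 \times n}$ be matrices of points in the plane with $Z\mathbf{1} = Z'\mathbf{1} = 0$ (centered columns). Let $D$ and $D'$ be the matrices of squared pairwise Euclidean distances, i.e., $D_{ij} = \|z_i - z_j\|_2^2$ and $D'_{ij} = \|z'_i - z'_j\|_2^2$. Then the Gram matrices satisfy $\|Z^T Z - Z'^T Z'\|_F \leq \|D - D'\|_F$. -/
open Finset Matrix

/-- For centered planar configurations, the Frobenius distance of the Gram
matrices is bounded by the Frobenius distance of the squared-distance matrices
(Lemma B.8 of the paper). -/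
theorem stmt4 (n : ℕ) (Z Z' : Matrix (Fin 2) (Fin n) ℝ)
    (hZ : ∀ k, ∑ j, Z k j = 0) (hZ' : ∀ k, ∑ j, Z' k j = 0) :
    Real.sqrt (∑ i, ∑ j, ((Zᵀ * Z) i j - (Z'ᵀ * Z') i j) ^ 2) ≤
      Real.sqrt (∑ i, ∑ j,
        ((∑ k, (Z k i - Z k j) ^ 2) - (∑ k, (Z' k i - Z' k j) ^ 2)) ^ 2) := by
  set g : Fin n → Fin n → ℝ := fun i j =>
    (Z 0 i * Z 0 j + Z 1 i * Z 1 j) - (Z' 0 i * Z' 0 j + Z' 1 i * Z' 1 j) with hg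
  have hrow : ∀ i, ∑ j, g i j = 0 := by
    intro i
    simp only [hg, Finset.sum_sub_distrib, Finset.sum_add_distrib, ← Finset.mul_sum]
    rw [hZ 0, hZ 1, hZ' 0, hZ' 1]; ring
  have hcol : ∀ j, ∑ i, g i j = 0 := by
    intro j
    have : ∀ i, g i j = g j i := by intro i; simp [hg]; ring
    simp_rw [this]; exact hrow j
  have hL : ∀ i j, (Zᵀ * Z) i j - (Z'ᵀ * Z') i j = g i j := by
    intro i j
    simp [Matrix.mul_apply, Fin.sum_univ_two, hg]
  have hR : ∀ i j, (∑ k, (Z k i - Z k j) ^ 2) - (∑ k, (Z' k i - Z' k j) ^ 2)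
      = g i i + g j j - 2 * g i j := by
    intro i j
    simp only [Fin.sum_univ_two, hg]; ring
  simp_rw [hL, hR]
  apply Real.sqrt_le_sqrt
  have hz1 : ∑ i, ∑ j, g i i * g i j = 0 := by
    simp_rw [← Finset.mul_sum]
    simp [hrow]
  have hz2 : ∑ i, ∑ j, g j j * g i j = 0 := by
    rw [Finset.sum_comm]
    simp_rw [← Finset.mul_sum]
    simp [hcol]
  have hexp : ∑ i, ∑ j, (g i i + g j j - 2 * g i j) ^ 2 =
      (∑ i, ∑ j, (g i i + g j j) ^ 2) + 4 * (∑ i, ∑ j, g i j ^ 2)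
        - 4 * (∑ i, ∑ j, g i i * g i j) - 4 * (∑ i, ∑ j, g j j * g i j) := by
    have : ∀ i j : Fin n, (g i i + g j j - 2 * g i j) ^ 2 =
        (g i i + g j j) ^ 2 + 4 * g i j ^ 2 - 4 * (g i i * g i j)
          - 4 * (g j j * g i j) := by intro i j; ring
    simp_rw [this, Finset.sum_sub_distrib, Finset.sum_add_distrib,
      ← Finset.mul_sum]
  have hA : 0 ≤ ∑ i, ∑ j, (g i i + g j j) ^ 2 := by positivity
  have hB : 0 ≤ ∑ i, ∑ j, g i j ^ 2 := by positivity
  rw [hexp, hz1, hz2]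
  linarith
end

section
/- Let $n = 2p+1$ be odd with $p \geq 2$, let $g(x) = 1 - x/(2\pi)$, and let $\alpha_m = 1 + 2\sum_{j=1}^p (1 - j/n)\cos(2\pi m j / n)$ be the $m$-th discrete Fourier coefficient of $g$. Then $\alpha_0 = \frac{3n}{4} + \frac{1}{4n}$, and for $1 \leq m \leq p$, $\alpha_m = \frac{\cos^2(m\pi/(2n))}{n \sin^2(\pi m/n)}$ if $m$ is odd and $\alpha_m = \frac{\sin^2(m\pi/(2n))}{n \sin^2(\pi m/n)}$ if $m$ is even. -/
open Finset Real

lemma aux_dirichlet (θ : ℝ) (p : ℕ) :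
    2 * Real.sin (θ/2) * ∑ j ∈ Finset.Icc 1 p, Real.cos (j*θ)
      = Real.sin ((2*p+1)*θ/2) - Real.sin (θ/2) := by
  induction p with
  | zero => simp
  | succ p ih =>
    rw [Finset.sum_Icc_succ_top (by omega)]
    have h1 : ((2*((p:ℝ)+1)+1))*θ/2 = ((p:ℝ)+1)*θ + θ/2 := by ring
    have h2 : ((2*(p:ℝ)+1))*θ/2 = ((p:ℝ)+1)*θ - θ/2 := by ring
    push_cast
    rw [h1, Real.sin_add]
    rw [h2, Real.sin_sub] at ih
    nlinarith [ih]

lemma aux_jcos (θ : ℝ) (p : ℕ) :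
    2 * (1 - Real.cos θ) * ∑ j ∈ Finset.Icc 1 p, (j:ℝ) * Real.cos (j*θ)
      = ((p:ℝ)+1) * Real.cos (p*θ) - (p:ℝ) * Real.cos ((p+1)*θ) - 1 := by
  induction p with
  | zero => simp
  | succ p ih =>
    rw [Finset.sum_Icc_succ_top (by omega)]
    have h1 : (((p:ℝ)+1)+1)*θ = ((p:ℝ)+1)*θ + θ := by ring
    have h2 : (p:ℝ)*θ = ((p:ℝ)+1)*θ - θ := by ring
    push_cast
    rw [h1, Real.cos_add]
    rw [h2, Real.cos_sub] at ih
    nlinarith [ih, Real.sin_sq_add_cos_sq θ]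

lemma aux_gauss (p : ℕ) : ∑ j ∈ Finset.Icc 1 p, (j:ℝ) = p*(p+1)/2 := by
  induction p with
  | zero => simp
  | succ p ih =>
    rw [Finset.sum_Icc_succ_top (by omega), ih]
    push_cast
    ring

/-- Explicit discrete Fourier coefficients of the affine function
`g(x) = 1 - x/(2π)` sampled on the regular grid of odd size `n = 2p+1`. -/
theorem stmt9 (p : ℕ) (hp : 2 ≤ p) (α : ℕ → ℝ)
    (hα : ∀ m, α m = 1 + 2 * ∑ j ∈ Finset.Icc 1 p,
        (1 - (j : ℝ) / (2 * p + 1)) * Real.cos (2 * π * m * j / (2 * p + 1))) :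
    α 0 = 3 * (2 * p + 1 : ℝ) / 4 + 1 / (4 * (2 * p + 1 : ℝ)) ∧
    ∀ m : ℕ, 1 ≤ m → m ≤ p →
      (Odd m → α m = Real.cos (m * π / (2 * (2 * p + 1))) ^ 2 /
          ((2 * p + 1) * Real.sin (π * m / (2 * p + 1)) ^ 2)) ∧
      (Even m → α m = Real.sin (m * π / (2 * (2 * p + 1))) ^ 2 /
          ((2 * p + 1) * Real.sin (π * m / (2 * p + 1)) ^ 2)) := by
  have hn0 : (0:ℝ) < 2*(p:ℕ) + 1 := by positivity
  have hne : (2*(p:ℝ)+1) ≠ 0 := by positivity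
  constructor
  · rw [hα 0]
    have hg := aux_gauss p
    simp only [Nat.cast_zero, mul_zero, zero_mul, zero_div, Real.cos_zero, mul_one]
    rw [Finset.sum_sub_distrib]
    simp only [Finset.sum_const, Nat.card_Icc, nsmul_eq_mul, mul_one, ← Finset.sum_div]
    rw [hg]
    have : ((p + 1 - 1 : ℕ) : ℝ) = p := by simp
    rw [this]
    field_simp
    ring
  · intro m hm1 hmp
    set θ : ℝ := 2*π*m/(2*(p:ℝ)+1) with hθdef
    set s : ℝ := Real.sin (π*(m:ℝ)/(2*(p:ℝ)+1)) with hsdef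
    have hθ2 : θ/2 = π*(m:ℝ)/(2*(p:ℝ)+1) := by rw [hθdef]; ring
    have hm0 : (0:ℝ) < m := by exact_mod_cast hm1
    have hmlt : (m:ℝ) < 2*(p:ℝ)+1 := by
      have : m < 2*p+1 := by omega
      exact_mod_cast this
    have hs_pos : 0 < s := by
      apply Real.sin_pos_of_pos_of_lt_pi
      · positivity
      · rw [div_lt_iff₀ (by positivity)]
        nlinarith [Real.pi_pos]
    have hs_ne : s ≠ 0 := ne_of_gt hs_pos
    -- rewrite the sum
    have hsum : α m = 1 + 2*((∑ j ∈ Finset.Icc 1 p, Real.cos (j*θ))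
        - (∑ j ∈ Finset.Icc 1 p, (j:ℝ)*Real.cos (j*θ))/(2*(p:ℝ)+1)) := by
      rw [hα m]
      congr 1
      have ht : ∑ j ∈ Finset.Icc 1 p, (1 - (j:ℝ)/(2*(p:ℝ)+1)) * Real.cos (2*π*(m:ℝ)*j/(2*(p:ℝ)+1))
          = ∑ j ∈ Finset.Icc 1 p, (Real.cos ((j:ℝ)*θ) - (j:ℝ)*Real.cos ((j:ℝ)*θ)/(2*(p:ℝ)+1)) := by
        apply Finset.sum_congr rfl
        intro j _
        rw [show 2*π*(m:ℝ)*j/(2*(p:ℝ)+1) = (j:ℝ)*θ by rw [hθdef]; ring]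
        ring
      rw [ht, Finset.sum_sub_distrib, ← Finset.sum_div]
    -- Dirichlet part
    have harg : (2*(p:ℝ)+1)*θ/2 = (m:ℝ)*π := by rw [hθdef]; field_simp
    have hd := aux_dirichlet θ p
    rw [harg, Real.sin_nat_mul_pi, hθ2] at hd
    have hScos : (∑ j ∈ Finset.Icc 1 p, Real.cos (j*θ)) = -(1/2) := by
      have h2 : s * (2*(∑ j ∈ Finset.Icc 1 p, Real.cos (j*θ)) + 1) = 0 := by
        linear_combination hd
      have := (mul_eq_zero.mp h2).resolve_left hs_ne
      linarith
    -- j*cos part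
    have hpθ : (p:ℝ)*θ = (m:ℝ)*π - π*(m:ℝ)/(2*(p:ℝ)+1) := by
      rw [hθdef]; field_simp; ring
    have hp1θ : ((p:ℝ)+1)*θ = (m:ℝ)*π - (-(π*(m:ℝ)/(2*(p:ℝ)+1))) := by
      rw [hθdef]; field_simp; ring
    set c : ℝ := Real.cos (π*(m:ℝ)/(2*(p:ℝ)+1)) with hcdef
    have hj := aux_jcos θ p
    rw [hpθ, hp1θ, Real.cos_nat_mul_pi_sub, Real.cos_nat_mul_pi_sub, Real.cos_neg] at hj
    -- 1 - cos θ = 2 s^2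
    have hcosθ : Real.cos θ = 1 - 2*s^2 := by
      have h2m := Real.cos_two_mul (θ/2)
      rw [show 2*(θ/2) = θ by ring, hθ2] at h2m
      have hpy := Real.sin_sq_add_cos_sq (π*(m:ℝ)/(2*(p:ℝ)+1))
      rw [hsdef]
      linarith
    have hSj : (∑ j ∈ Finset.Icc 1 p, (j:ℝ)*Real.cos (j*θ))
        = ((-1:ℝ)^m * c - 1)/(4*s^2) := by
      rw [hcosθ] at hj
      have hs2 : (4:ℝ)*s^2 ≠ 0 := by positivity
      field_simp
      linear_combination hj
    have hαm : α m = (1 - (-1:ℝ)^m * c) / (2*(2*(p:ℝ)+1)*s^2) := by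
      rw [hsum, hScos, hSj]
      field_simp
      ring
    have harg2 : 2*((m:ℝ)*π/(2*(2*(p:ℝ)+1))) = π*(m:ℝ)/(2*(p:ℝ)+1) := by
      field_simp
    have hs2 : s^2 ≠ 0 := pow_ne_zero 2 hs_ne
    constructor
    · intro hodd
      have hcs : Real.cos ((m:ℝ)*π/(2*(2*(p:ℝ)+1)))^2 = 1/2 + c/2 := by
        rw [Real.cos_sq, harg2, hcdef]
      rw [hαm, Odd.neg_one_pow hodd, hcs]
      rw [div_eq_div_iff (by positivity) (by positivity)]
      ring
    · intro heven
      have hss : Real.sin ((m:ℝ)*π/(2*(2*(p:ℝ)+1)))^2 = 1/2 - c/2 := by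
        rw [Real.sin_sq_eq_half_sub, harg2, hcdef]
      rw [hαm, Even.neg_one_pow heven, hss]
      rw [div_eq_div_iff (by positivity) (by positivity)]
      ring
end

section
/- Let $n = 2p+1$ be odd with $p \geq 2$ and $\alpha_m$ the Fourier coefficients of $g(x) = 1 - x/(2\pi)$ as above. Then the sequence of odd-indexed coefficients is strictly decreasing: $\alpha_1 > \alpha_3 > \alpha_5 > \cdots$, and each even-indexed coefficient satisfies $\alpha_{2r} \leq \alpha_{2r-1}$ for all $r = 1, \ldots, \lfloor p/2 \rfloor$. In particular $\alpha_1 \geq \alpha_m$ for all $m = 2, \ldots, p$. -/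
open Real Set

/-!
With `θ_m = mπ/(2n)` the double-angle formula `sin 2θ = 2 sin θ cos θ` turns the coefficients into
`α_m = 1/(4n sin² θ_m)` for odd `m` and `α_m = 1/(4n cos² θ_m)` for even `m`. For `1 ≤ m < n` the
angle `θ_m` lies in `(0, π/2)`, where `sin` increases, so the odd coefficients decrease; and if
`a + b ≤ n` then `θ_a + θ_b ≤ π/2`, so `sin θ_a ≤ cos θ_b` and the even coefficient `α_b` is at most
the odd one `α_a`.
-/

lemma cos_sq_div_mul_sin_two_mul_sq {θ : ℝ} (c : ℝ) (h : cos θ ≠ 0) :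
    cos θ ^ 2 / (c * sin (2 * θ) ^ 2) = (4 * c * sin θ ^ 2)⁻¹ := by
  rw [sin_two_mul]
  field_simp
  ring

lemma sin_sq_div_mul_sin_two_mul_sq {θ : ℝ} (c : ℝ) (h : sin θ ≠ 0) :
    sin θ ^ 2 / (c * sin (2 * θ) ^ 2) = (4 * c * cos θ ^ 2)⁻¹ := by
  rw [sin_two_mul]
  field_simp
  ring

lemma sin_le_cos_of_add_le_pi_div_two {x y : ℝ} (hx : -(π / 2) ≤ x) (hy : 0 ≤ y)
    (hxy : x + y ≤ π / 2) : sin x ≤ cos y := by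
  rw [← sin_pi_div_two_sub]
  exact sin_le_sin_of_le_of_le_pi_div_two hx (by linarith) (by linarith)

lemma pi_mul_div_eq_two_mul (m N : ℝ) : π * m / N = 2 * (m * π / (2 * N)) := by
  ring

lemma mul_pi_div_mem_Ioo {m N : ℝ} (hm : 0 < m) (hmN : m < N) :
    m * π / (2 * N) ∈ Ioo 0 (π / 2) := by
  have hN : 0 < N := hm.trans hmN
  refine ⟨by positivity, ?_⟩
  rw [div_lt_div_iff₀ (by positivity) two_pos]
  nlinarith [pi_pos]

section Coefficients

variable {α : ℕ → ℝ} {N : ℝ}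

lemma coeff_odd_eq
    (hα : ∀ m, Odd m → α m = cos (m * π / (2 * N)) ^ 2 / (N * sin (π * m / N) ^ 2))
    {m : ℕ} (hm : Odd m) (hmN : m < N) :
    α m = (4 * N * sin (m * π / (2 * N)) ^ 2)⁻¹ := by
  have hθ := mul_pi_div_mem_Ioo (by exact_mod_cast hm.pos) hmN
  rw [hα m hm, pi_mul_div_eq_two_mul, cos_sq_div_mul_sin_two_mul_sq]
  exact (cos_pos_of_mem_Ioo ⟨by linarith [hθ.1, pi_pos], hθ.2⟩).ne'

lemma coeff_even_eq
    (hα : ∀ m, Even m → α m = sin (m * π / (2 * N)) ^ 2 / (N * sin (π * m / N) ^ 2))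
    {m : ℕ} (hm : Even m) (hm0 : 0 < m) (hmN : m < N) :
    α m = (4 * N * cos (m * π / (2 * N)) ^ 2)⁻¹ := by
  have hθ := mul_pi_div_mem_Ioo (by exact_mod_cast hm0) hmN
  rw [hα m hm, pi_mul_div_eq_two_mul, sin_sq_div_mul_sin_two_mul_sq]
  exact (sin_pos_of_pos_of_lt_pi hθ.1 (by linarith [hθ.2, pi_pos])).ne'

lemma coeff_odd_strictAnti
    (hα : ∀ m, Odd m → α m = cos (m * π / (2 * N)) ^ 2 / (N * sin (π * m / N) ^ 2))
    {a b : ℕ} (ha : Odd a) (hb : Odd b) (hab : a < b) (hbN : b < N) : α b < α a := by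
  have haN : (a : ℝ) < N := lt_trans (by exact_mod_cast hab) hbN
  have hθa := mul_pi_div_mem_Ioo (by exact_mod_cast ha.pos) haN
  have hθb := mul_pi_div_mem_Ioo (by exact_mod_cast hb.pos) hbN
  have hN : 0 < N := (Nat.cast_pos.2 hb.pos).trans hbN
  have hθab : a * π / (2 * N) < b * π / (2 * N) := by gcongr
  have hsin_a : 0 < sin (a * π / (2 * N)) :=
    sin_pos_of_pos_of_lt_pi hθa.1 (by linarith [hθa.2, pi_pos])
  have hsin : sin (a * π / (2 * N)) < sin (b * π / (2 * N)) :=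
    sin_lt_sin_of_lt_of_le_pi_div_two (by linarith [hθa.1, pi_pos]) hθb.2.le hθab
  rw [coeff_odd_eq hα ha haN, coeff_odd_eq hα hb hbN]
  gcongr

lemma coeff_even_le_coeff_odd
    (hαodd : ∀ m, Odd m → α m = cos (m * π / (2 * N)) ^ 2 / (N * sin (π * m / N) ^ 2))
    (hαeven : ∀ m, Even m → α m = sin (m * π / (2 * N)) ^ 2 / (N * sin (π * m / N) ^ 2))
    {a b : ℕ} (ha : Odd a) (hb : Even b) (hb0 : 0 < b) (hab : (a + b : ℝ) ≤ N) : α b ≤ α a := by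
  have haN : (a : ℝ) < N := by linarith [(Nat.cast_pos (α := ℝ)).2 hb0]
  have hbN : (b : ℝ) < N := by linarith [(Nat.cast_pos (α := ℝ)).2 ha.pos]
  have hN : 0 < N := (Nat.cast_pos.2 hb0).trans hbN
  have hθa := mul_pi_div_mem_Ioo (by exact_mod_cast ha.pos) haN
  have hθb := mul_pi_div_mem_Ioo (by exact_mod_cast hb0) hbN
  have hθab : a * π / (2 * N) + b * π / (2 * N) ≤ π / 2 := by
    rw [← add_div, ← add_mul, div_le_div_iff₀ (by positivity) two_pos]
    nlinarith [pi_pos]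
  have hsin_a : 0 < sin (a * π / (2 * N)) :=
    sin_pos_of_pos_of_lt_pi hθa.1 (by linarith [hθa.2, pi_pos])
  have hsc := sin_le_cos_of_add_le_pi_div_two (by linarith [hθa.1, pi_pos]) hθb.1.le hθab
  rw [coeff_odd_eq hαodd ha haN, coeff_even_eq hαeven hb hb0 hbN]
  gcongr

end Coefficients

theorem stmt10_general (p : ℕ) (α : ℕ → ℝ)
    (hαodd : ∀ m, Odd m → α m = Real.cos (m * π / (2 * (2 * p + 1))) ^ 2 /
        ((2 * p + 1) * Real.sin (π * m / (2 * p + 1)) ^ 2))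
    (hαeven : ∀ m, Even m → α m = Real.sin (m * π / (2 * (2 * p + 1))) ^ 2 /
        ((2 * p + 1) * Real.sin (π * m / (2 * p + 1)) ^ 2)) :
    (∀ m₁ m₂ : ℕ, Odd m₁ → Odd m₂ → 1 ≤ m₁ → m₁ < m₂ → m₂ ≤ p → α m₂ < α m₁) ∧
    (∀ r : ℕ, 1 ≤ r → r ≤ p / 2 → α (2 * r) ≤ α (2 * r - 1)) ∧
    (∀ m : ℕ, 2 ≤ m → m ≤ p → α m ≤ α 1) := by
  have lt_N {m : ℕ} (hm : m ≤ p) : (m : ℝ) < 2 * p + 1 := by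
    exact_mod_cast (show m < 2 * p + 1 by omega)
  have add_le_N {a b : ℕ} (hab : a + b ≤ 2 * p + 1) : (a + b : ℝ) ≤ 2 * p + 1 := by
    exact_mod_cast hab
  refine ⟨fun m₁ m₂ h₁ h₂ _ h₁₂ h₂p => coeff_odd_strictAnti hαodd h₁ h₂ h₁₂ (lt_N h₂p), ?_, ?_⟩
  · intro r hr hrp
    exact coeff_even_le_coeff_odd hαodd hαeven (Nat.odd_iff.2 (by omega)) (even_two_mul r)
      (by omega) (add_le_N (by omega))
  · intro m hm hmp
    rcases Nat.even_or_odd m with he | ho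
    · exact coeff_even_le_coeff_odd hαodd hαeven odd_one he (by omega) (add_le_N (by omega))
    · exact (coeff_odd_strictAnti hαodd odd_one ho (by omega) (lt_N hmp)).le

/-- Ordering of the discrete Fourier coefficients of `g(x) = 1 - x/(2π)`:
odd-indexed coefficients strictly decrease, each even-indexed one is dominated
by the previous odd-indexed one, and `α₁` dominates all `α_m`, `2 ≤ m ≤ p`. -/
theorem stmt10 (p : ℕ) (hp : 2 ≤ p) (α : ℕ → ℝ)
    (hαodd : ∀ m, Odd m → α m = Real.cos (m * π / (2 * (2 * p + 1))) ^ 2 /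
        ((2 * p + 1) * Real.sin (π * m / (2 * p + 1)) ^ 2))
    (hαeven : ∀ m, Even m → α m = Real.sin (m * π / (2 * (2 * p + 1))) ^ 2 /
        ((2 * p + 1) * Real.sin (π * m / (2 * p + 1)) ^ 2)) :
    (∀ m₁ m₂ : ℕ, Odd m₁ → Odd m₂ → 1 ≤ m₁ → m₁ < m₂ → m₂ ≤ p → α m₂ < α m₁) ∧
    (∀ r : ℕ, 1 ≤ r → r ≤ p / 2 → α (2 * r) ≤ α (2 * r - 1)) ∧
    (∀ m : ℕ, 2 ≤ m → m ≤ p → α m ≤ α 1) :=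
  stmt10_general p α hαodd hαeven
end

section
/- Let $F$ be a symmetric $n \times n$ matrix with $F_{ij} = f(x_i, x_j)$ for $i < j$, where $f \in \mathcal{BL}[c_l, c_L, 0]$ is strictly bi-Lipschitz (slack $c_e = 0$) and $\mathbf{x}, \mathbf{x}' \in \boldsymbol{\Pi}_n$ are both regular configurations with $(\mathbf{x}, f)$ and $(\mathbf{x}', f')$ both representations of $F$. Then there exists an orthogonal transformation $Q$ of $\mathbb{R}^2$ such that $\mathbf{x} = Q\mathbf{x}'$. -/
/-!
Strict bi-Lipschitz decay makes `f (x i) ·` a strictly decreasing function of `gd (x i) ·`,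
so the `i`-th row of `F` fixes the order of the distances from `x i`. For a regular
configuration every row of the distance matrix is a permutation of the same values, and an
order-preserving permutation of finitely many values is trivial; hence the two
configurations have the same distance matrix. Indexing the grid by `ZMod n`, a map preserving
the circular distance `|valMinAbs|` is `a ↦ c ± a`, i.e. a rotation, possibly composed with
complex conjugation.
-/

open Real

/-- Geodesic distance on the unit circle `Circle ⊆ ℂ`. -/
noncomputable def gd (z w : Circle) : ℝ := |Complex.arg ((z : ℂ) / (w : ℂ))|

/-- A configuration is regular if it enumerates (via some permutation) the
regular `n`-point grid `{e^{2πik/n}}` on the circle, i.e. it belongs to `Π_n`. -/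
def RegularConfig (n : ℕ) (x : Fin n → Circle) : Prop :=
  ∃ σ : Equiv.Perm (Fin n), ∀ j, x j = Circle.exp (2 * π * ((σ j : Fin n) : ℕ) / n)

/-- The bi-Lipschitz class `BL[c_l, c_L, ε]` of affinity functions on the
circle: symmetric, `[0,1]`-valued, upper Lipschitz with slack `ε` and with a
minimal decay `c_l` (with slack `ε`) in the geodesic distance. -/
def BiLip (cl cL ε : ℝ) (f : Circle → Circle → ℝ) : Prop :=
  (∀ x y, f x y ∈ Set.Icc (0 : ℝ) 1) ∧
  (∀ x y, f x y = f y x) ∧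
  (∀ x y y', |f x y - f x y'| ≤ cL * gd y y' + ε) ∧
  (∀ x y y', gd x y' ≤ gd x y → f x y' - f x y ≥ cl * (gd x y - gd x y') - ε)

open ZMod

lemma gd_nonneg (z w : Circle) : 0 ≤ gd z w := abs_nonneg _

lemma gd_eq_zero_iff {z w : Circle} : gd z w = 0 ↔ z = w := by
  rw [gd, abs_eq_zero, ← Circle.coe_div, Circle.arg_eq_zero, div_eq_one]

lemma gd_self (z : Circle) : gd z z = 0 := gd_eq_zero_iff.2 rfl

lemma gd_pos_iff {z w : Circle} : 0 < gd z w ↔ z ≠ w := by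
  rw [(gd_nonneg z w).lt_iff_ne', Ne, gd_eq_zero_iff]

lemma BiLip.gd_lt_gd_iff {cl cL : ℝ} {f : Circle → Circle → ℝ} (hf : BiLip cl cL 0 f)
    (hcl : 0 < cl) (p u v : Circle) : gd p u < gd p v ↔ f p v < f p u := by
  constructor
  · intro h
    nlinarith [hf.2.2.2 p v u h.le]
  · intro h
    by_contra! hc
    nlinarith [hf.2.2.2 p u v hc]

lemma comp_eq_self_of_lt_iff_lt {ι α : Type*} [Fintype ι] [LinearOrder α] (a : ι → α)
    (e : ι ≃ ι) (h : ∀ j k, a j < a k ↔ a (e j) < a (e k)) : a ∘ e = a := by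
  classical
  set rank : α → ℕ := fun t => (Finset.univ.filter fun k => a k < t).card
  have rank_lt {s t : α} (k : ι) (hs : s ≤ a k) (ht : a k < t) : rank s < rank t := by
    refine Finset.card_lt_card ((Finset.ssubset_iff_of_subset ?_).2 ⟨k, ?_, ?_⟩)
    · intro l hl
      simp only [Finset.mem_filter, Finset.mem_univ, true_and] at hl ⊢
      exact hl.trans (hs.trans_lt ht)
    · simpa using ht
    · simpa using hs
  have rank_eq (j : ι) : rank (a j) = rank (a (e j)) :=
    Finset.card_equiv e fun k => by simpa using h k j
  funext j
  rcases lt_trichotomy (a (e j)) (a j) with hlt | heq | hgt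
  · exact absurd (rank_eq j) (rank_lt (e j) le_rfl hlt).ne'
  · exact heq
  · exact absurd (rank_eq j) (rank_lt j le_rfl hgt).ne

lemma gd_eq_gd_of_represents {ι : Type*} [Fintype ι] {cl cL : ℝ} (hcl : 0 < cl)
    {f f' : Circle → Circle → ℝ} (hf : BiLip cl cL 0 f) (hf' : BiLip cl cL 0 f')
    {x x' : ι → Circle} (hx : Function.Injective x) (hx' : Function.Injective x')
    (hrep : ∀ i j, i ≠ j → f (x i) (x j) = f' (x' i) (x' j))
    (hrow : ∀ i, ∃ e : ι ≃ ι, ∀ j, gd (x' i) (x' j) = gd (x i) (x (e j))) (i j : ι) :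
    gd (x i) (x j) = gd (x' i) (x' j) := by
  obtain ⟨e, he⟩ := hrow i
  have hcmp (j k : ι) :
      gd (x i) (x j) < gd (x i) (x k) ↔ gd (x' i) (x' j) < gd (x' i) (x' k) := by
    rcases eq_or_ne j i with rfl | hj
    · rw [gd_self, gd_self, gd_pos_iff, gd_pos_iff, hx.ne_iff, hx'.ne_iff]
    rcases eq_or_ne k i with rfl | hk
    · rw [gd_self, gd_self]
      exact iff_of_false (gd_nonneg _ _).not_gt (gd_nonneg _ _).not_gt
    rw [hf.gd_lt_gd_iff hcl, hf'.gd_lt_gd_iff hcl, hrep i k hk.symm, hrep i j hj.symm]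
  have := comp_eq_self_of_lt_iff_lt (fun j => gd (x i) (x j)) e fun j k => by
    simpa only [← he] using hcmp j k
  rw [he, ← congrFun this j]
  rfl

lemma ZMod.eq_add_or_eq_sub_of_sub_eq_or_sub_eq_neg {n : ℕ} {ρ : ZMod n → ZMod n}
    (h : ∀ a b, ρ a - ρ b = a - b ∨ ρ a - ρ b = -(a - b)) :
    (∀ a, ρ a = ρ 0 + a) ∨ (∀ a, ρ a = ρ 0 - a) := by
  set δ : ZMod n → ZMod n := fun a => ρ (a + 1) - ρ a
  have hδ (a : ZMod n) : δ a = 1 ∨ δ a = -1 := by simpa [δ] using h (a + 1) a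
  have hδδ (a : ZMod n) : δ (a + 1) + δ a = 2 ∨ δ (a + 1) + δ a = -2 := by
    have := h (a + 1 + 1) a
    simp only [δ]
    ring_nf at this ⊢
    exact this
  -- two consecutive steps of opposite signs would force `2 = 0`, i.e. `1 = -1`
  have hδ_succ (a : ZMod n) : δ (a + 1) = δ a := by
    rcases hδδ a with h2 | h2 <;> rcases hδ a with h0 | h0 <;>
      rcases hδ (a + 1) with h1 | h1 <;> rw [h0, h1] at h2 ⊢ <;>
      first | rfl | linear_combination h2 | linear_combination -h2
  have hδ_const (m : ℤ) : δ m = δ 0 := by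
    induction m using Int.induction_on with
    | zero => simp
    | succ m ih => push_cast at ih ⊢; rw [hδ_succ, ih]
    | pred m ih => push_cast at ih ⊢; rw [← ih, ← hδ_succ, sub_add_cancel]
  have hρ (m : ℤ) : ρ m = ρ 0 + m * δ 0 := by
    induction m using Int.induction_on with
    | zero => simp
    | succ m ih =>
      have := hδ_const m
      push_cast at ih this ⊢
      linear_combination ih + this
    | pred m ih =>
      have := hδ_const (-m - 1)
      push_cast at ih this ⊢
      simp only [δ, sub_add_cancel] at this
      linear_combination ih - this
  rcases hδ 0 with h1 | h1 <;> [left; right] <;> intro a <;>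
    obtain ⟨m, rfl⟩ := ZMod.intCast_surjective a <;> rw [hρ, h1] <;> ring

lemma gd_toCircle {n : ℕ} [NeZero n] (a b : ZMod n) :
    gd (toCircle a) (toCircle b) = 2 * π / n * |((a - b).valMinAbs : ℝ)| := by
  have hn : (0 : ℝ) < n := by exact_mod_cast Nat.pos_of_ne_zero (NeZero.ne n)
  have hv : toCircle (a - b) = Circle.exp (2 * π * (a - b).valMinAbs / n) := by
    ext
    rw [← coe_valMinAbs (a - b), toCircle_intCast, Circle.coe_exp]
    push_cast
    ring_nf
  have hbound := (a - b).valMinAbs_mem_Ioc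
  have hlo : (-n : ℝ) < (a - b).valMinAbs * 2 := by exact_mod_cast hbound.1
  have hhi : ((a - b).valMinAbs * 2 : ℝ) ≤ n := by exact_mod_cast hbound.2
  rw [gd, ← Circle.coe_div, ← AddChar.map_sub_eq_div, hv, Circle.arg_exp, mul_div_right_comm,
    abs_mul, abs_of_pos (by positivity : 0 < 2 * π / n)]
  · rw [lt_div_iff₀ hn]; nlinarith [pi_pos]
  · rw [div_le_iff₀ hn]; nlinarith [pi_pos]

lemma exists_perm_gd_toCircle_eq {ι : Type*} {n : ℕ} [NeZero n] (S T : ι ≃ ZMod n) (i : ι) :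
    ∃ e : ι ≃ ι, ∀ j,
      gd (toCircle (T i)) (toCircle (T j)) = gd (toCircle (S i)) (toCircle (S (e j))) := by
  refine ⟨T.trans ((Equiv.addLeft (S i - T i)).trans S.symm), fun j => ?_⟩
  simp only [gd_toCircle, Equiv.trans_apply, Equiv.coe_addLeft, Equiv.apply_symm_apply]
  ring_nf

lemma RegularConfig.exists_equiv_zmod {n : ℕ} [NeZero n] {x : Fin n → Circle}
    (hx : RegularConfig n x) : ∃ S : Fin n ≃ ZMod n, x = fun j => toCircle (S j) := by
  obtain ⟨σ, hσ⟩ := hx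
  refine ⟨σ.trans (finEquiv n).toEquiv, funext fun j => ?_⟩
  rw [hσ, toCircle_eq_circleExp, mul_div_assoc]
  obtain ⟨m, rfl⟩ : ∃ m, n = m + 1 := Nat.exists_eq_succ_of_ne_zero (NeZero.ne n)
  -- `finEquiv (m + 1)` is the identity of `Fin (m + 1) = ZMod (m + 1)`, where `val` is `Fin.val`
  rfl

lemma exists_linearIsometryEquiv_toCircle_of_affine {ι : Type*} {n : ℕ} [NeZero n]
    {u v : ι → ZMod n} (c : ZMod n) (h : (∀ i, u i = c + v i) ∨ (∀ i, u i = c - v i)) :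
    ∃ Q : ℂ ≃ₗᵢ[ℝ] ℂ, ∀ i, (toCircle (u i) : ℂ) = Q (toCircle (v i)) := by
  rcases h with h | h
  · refine ⟨rotation (toCircle c), fun i => ?_⟩
    rw [h, AddChar.map_add_eq_mul, rotation_apply, Circle.coe_mul]
  · refine ⟨Complex.conjLIE.trans (rotation (toCircle c)), fun i => ?_⟩
    rw [h, AddChar.map_sub_eq_div, LinearIsometryEquiv.trans_apply, Complex.conjLIE_apply,
      rotation_apply, Circle.coe_div, ← Circle.coe_inv_eq_conj, Circle.coe_inv, div_eq_mul_inv]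

theorem stmt12_general (n : ℕ) (cl cL : ℝ) (hcl : 0 < cl)
    (f f' : Circle → Circle → ℝ)
    (hf : BiLip cl cL 0 f) (hf' : BiLip cl cL 0 f')
    (x x' : Fin n → Circle) (hx : RegularConfig n x) (hx' : RegularConfig n x')
    (hrep : ∀ i j : Fin n, i < j → f (x i) (x j) = f' (x' i) (x' j)) :
    ∃ Q : ℂ ≃ₗᵢ[ℝ] ℂ, ∀ i, (x i : ℂ) = Q ((x' i : ℂ)) := by
  rcases eq_or_ne n 0 with rfl | hn
  · exact ⟨LinearIsometryEquiv.refl ℝ ℂ, fun i => i.elim0⟩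
  have : NeZero n := ⟨hn⟩
  obtain ⟨S, rfl⟩ := hx.exists_equiv_zmod
  obtain ⟨T, rfl⟩ := hx'.exists_equiv_zmod
  have hrep' (i j : Fin n) (hij : i ≠ j) : f (toCircle (S i)) (toCircle (S j)) =
      f' (toCircle (T i)) (toCircle (T j)) := by
    rcases hij.lt_or_gt with h | h
    · exact hrep i j h
    · rw [hf.2.1, hf'.2.1]
      exact hrep j i h
  have hdist (i j : Fin n) :
      gd (toCircle (S i)) (toCircle (S j)) = gd (toCircle (T i)) (toCircle (T j)) :=
    gd_eq_gd_of_represents hcl hf hf' (injective_toCircle.comp S.injective)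
      (injective_toCircle.comp T.injective) hrep' (exists_perm_gd_toCircle_eq S T) i j
  set ρ := T.symm.trans S
  have hρ (a b : ZMod n) : ρ a - ρ b = a - b ∨ ρ a - ρ b = -(a - b) := by
    have h := hdist (T.symm a) (T.symm b)
    rw [gd_toCircle, gd_toCircle, mul_right_inj' (by positivity), Equiv.apply_symm_apply,
      Equiv.apply_symm_apply] at h
    exact abs_valMinAbs_eq_abs_valMinAbs.1 (by exact_mod_cast h)
  exact exists_linearIsometryEquiv_toCircle_of_affine (ρ 0) <|
    (eq_add_or_eq_sub_of_sub_eq_or_sub_eq_neg hρ).imp (fun h i => by simpa [ρ] using h (T i))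
      fun h i => by simpa [ρ] using h (T i)

/-- Identifiability over regular configurations (second part of
Proposition 2.2 with `c_e = 0`): two regular representations of the same
affinity matrix coincide up to an orthogonal transformation of the plane. -/
theorem stmt12 (n : ℕ) (cl cL : ℝ) (hcl : 0 < cl) (hclL : cl ≤ cL)
    (f f' : Circle → Circle → ℝ)
    (hf : BiLip cl cL 0 f) (hf' : BiLip cl cL 0 f')
    (x x' : Fin n → Circle) (hx : RegularConfig n x) (hx' : RegularConfig n x')
    (hrep : ∀ i j : Fin n, i < j → f (x i) (x j) = f' (x' i) (x' j)) :
    ∃ Q : ℂ ≃ₗᵢ[ℝ] ℂ, ∀ i, (x i : ℂ) = Q ((x' i : ℂ)) :=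
  stmt12_general n cl cL hcl f f' hf hf' x x' hx hx' hrep
end

section
/- Suppose the entries of a symmetric matrix $A \in \mathbb{R}^{n \times n}$ satisfy $A_{ij} = h(d(x^*_i, x^*_j))$ for a strictly decreasing function $h$, where $\mathbf{x}^* \in \boldsymbol{\Pi}_n$ is a regular configuration on the circle with every $x_i^*$ in the regular grid $\mathcal{C}_n$. Then for each index $i$, the point $x_i^*$ minimizes $z \mapsto \sum_{j=1}^n A_{ij}\, d(z, x^*_j)$ over $z \in \mathcal{C}_n$. -/
/-!
Rotating the circle by the grid element that carries `x i` to `z` permutes the regular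
configuration and preserves `gd`, so `∑ j, A i j * gd z (x j)` is `∑ j, A i j * gd (x i) (x j)`
with the distances permuted. Since the weights `A i j` decrease with `gd (x i) (x j)`, the
rearrangement inequality shows the unpermuted sum is the smallest.
-/

open Real Finset

lemma antivary_comp_self_of_antitoneOn {ι α β : Type*} [Preorder α] [Preorder β] {f : α → β}
    {g : ι → α} {s : Set α} (hf : AntitoneOn f s) (hg : ∀ i, g i ∈ s) : Antivary (f ∘ g) g :=
  fun _ _ hij => hf (hg _) (hg _) hij.le

lemma gd_mul_right (z u w : Circle) : gd (z * w) (u * w) = gd z u := by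
  simp only [gd, Circle.coe_mul, mul_div_mul_right _ _ (Circle.coe_ne_zero w)]

lemma gd_mem_Icc (z w : Circle) : gd z w ∈ Set.Icc 0 π :=
  ⟨abs_nonneg _, Complex.abs_arg_le_pi _⟩

noncomputable def gridPt (n : ℕ) (k : Fin n) : Circle := Circle.exp (2 * π * (k : ℕ) / n)

lemma gridPt_eq_pow (n : ℕ) (k : Fin n) : gridPt n k = Circle.exp (2 * π / n) ^ (k : ℕ) := by
  rw [gridPt, ← Circle.exp_nsmul, nsmul_eq_mul]
  ring_nf

lemma Circle.exp_two_pi_div_pow_self {n : ℕ} (hn : n ≠ 0) : Circle.exp (2 * π / n) ^ n = 1 := by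
  rw [← Circle.exp_nsmul, nsmul_eq_mul, mul_div_cancel₀ _ (Nat.cast_ne_zero.2 hn),
    Circle.exp_two_pi]

lemma gridPt_add {n : ℕ} [NeZero n] (a c : Fin n) :
    gridPt n (a + c) = gridPt n a * gridPt n c := by
  simp only [gridPt_eq_pow, Fin.val_add, ← pow_add]
  exact (pow_eq_pow_mod _ (Circle.exp_two_pi_div_pow_self (NeZero.ne n))).symm

lemma RegularConfig.exists_perm_gd_gridPt {n : ℕ} {x : Fin n → Circle} (hx : RegularConfig n x)
    (i k : Fin n) : ∃ τ : Equiv.Perm (Fin n), ∀ j, gd (gridPt n k) (x j) = gd (x i) (x (τ j)) := by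
  have : NeZero n := ⟨(Fin.pos i).ne'⟩
  obtain ⟨σ, hσ⟩ := hx
  have hxσ : ∀ j, x j = gridPt n (σ j) := hσ
  obtain ⟨c, hc⟩ : ∃ c, σ i = k + c := ⟨σ i - k, by abel⟩
  -- `τ` is the rotation by `gridPt n c`, read through the labelling `σ`.
  refine ⟨(σ.trans (Equiv.addRight c)).trans σ.symm, fun j => ?_⟩
  simp only [hxσ, hc, Equiv.trans_apply, Equiv.apply_symm_apply, Equiv.coe_addRight,
    gridPt_add, gd_mul_right]

/-- Noiseless localization (Appendix A): if `A_{ij} = h(d(x*_i, x*_j))` with `h`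
strictly decreasing and `x*` a regular configuration, then `x*_i` minimizes
`z ↦ ∑_j A_{ij} d(z, x*_j)` over the regular grid `𝒞_n`. -/
theorem stmt13 (n : ℕ) (h : ℝ → ℝ) (hdec : StrictAntiOn h (Set.Icc 0 π))
    (x : Fin n → Circle) (hx : RegularConfig n x)
    (A : Fin n → Fin n → ℝ) (hA : ∀ i j, A i j = h (gd (x i) (x j)))
    (i : Fin n) (z : Circle)
    (hz : ∃ k : Fin n, z = Circle.exp (2 * π * (k : ℕ) / n)) :
    ∑ j, A i j * gd (x i) (x j) ≤ ∑ j, A i j * gd z (x j) := by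
  obtain ⟨k, rfl⟩ := hz
  obtain ⟨τ, hτ⟩ := hx.exists_perm_gd_gridPt i k
  have hAi : A i = h ∘ fun j => gd (x i) (x j) := funext (hA i)
  have hanti : Antivary (A i) fun j => gd (x i) (x j) :=
    hAi ▸ antivary_comp_self_of_antitoneOn hdec.antitoneOn fun _ => gd_mem_Icc _ _
  calc ∑ j, A i j * gd (x i) (x j)
      ≤ ∑ j, A i j * gd (x i) (x (τ j)) := hanti.sum_mul_le_sum_mul_comp_perm
    _ = ∑ j, A i j * gd (gridPt n k) (x j) := by simp_rw [hτ]
end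

section
/- Suppose further that $A_{ij} = h(d(x_i^*, x_j^*))$ with $h$ satisfying $h(s) - h(t) \geq c_l (t - s)$ for all $0 \leq s \leq t \leq \pi$, and $\mathbf{x}^* \in \boldsymbol{\Pi}_n$ enumerates $\mathcal{C}_n$. Then for every $z \in \mathcal{C}_n$ and every $i$, $\sum_{j=1}^n A_{ij}\, d(z, x_j^*) \geq \sum_{j=1}^n A_{ij}\, d(x_i^*, x_j^*) + \frac{c_l}{2}\sum_{j=1}^n \bigl(d(x_i^*, x_j^*) - d(z, x_j^*)\bigr)^2$. -/
open Real Finset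

lemma gd_exp (u v : ℝ) : gd (Circle.exp u) (Circle.exp v)
    = |Complex.arg (Circle.exp (u - v) : ℂ)| := by
  rw [gd, Circle.exp_sub]
  norm_cast

lemma arg_exp_add_int (θ : ℝ) (m : ℤ) :
    |Complex.arg (Circle.exp (θ + 2 * π * m) : ℂ)| = |Complex.arg (Circle.exp θ : ℂ)| := by
  have he : Circle.exp (θ + 2 * π * m) = Circle.exp θ :=
    Circle.exp_eq_exp.mpr ⟨m, by ring⟩
  rw [he]

lemma arg_exp_neg (θ : ℝ) :
    |Complex.arg (Circle.exp (-θ) : ℂ)| = |Complex.arg (Circle.exp θ : ℂ)| := by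
  rw [Circle.exp_neg]
  push_cast
  rw [Complex.arg_inv]
  split <;> simp [*, abs_of_nonneg Real.pi_pos.le]

lemma fin_val_add_int (n : ℕ) [NeZero n] (a c : Fin n) :
    ∃ m : ℤ, ((a + c : Fin n) : ℤ) = (a : ℤ) + c + n * m := by
  refine ⟨-(((a : ℤ) + c) / n), ?_⟩
  have hv : ((a + c : Fin n) : ℕ) = ((a : ℕ) + c) % n := Fin.val_add a c
  rw [hv]; push_cast [Int.emod_def]; ring

lemma fin_val_sub_int (n : ℕ) [NeZero n] (a c : Fin n) :
    ∃ m : ℤ, ((a - c : Fin n) : ℤ) = (a : ℤ) - c + n * m := by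
  have hsd : ((a - c : Fin n) : ℕ) = (n - (c : ℕ) + a) % n := by rw [Fin.sub_def]
  refine ⟨1 - ((n - (c : ℤ) + a) / n), ?_⟩
  rw [hsd]
  have hc : (c : ℕ) ≤ n := c.2.le
  push_cast [Int.emod_def, Nat.cast_sub hc]
  ring

/-- Noiseless quadratic lower bound (Appendix A): under the lower Lipschitz
decay condition on `h`, the criterion `z ↦ ∑_j A_{ij} d(z, x*_j)` grows at
least quadratically when `z` moves away from `x*_i` over the regular grid. -/
theorem stmt14 (n : ℕ) (cl : ℝ) (hcl : 0 < cl) (h : ℝ → ℝ)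
    (hlip : ∀ s t : ℝ, 0 ≤ s → s ≤ t → t ≤ π → h s - h t ≥ cl * (t - s))
    (x : Fin n → Circle) (hx : RegularConfig n x)
    (A : Fin n → Fin n → ℝ) (hA : ∀ i j, A i j = h (gd (x i) (x j)))
    (i : Fin n) (z : Circle)
    (hz : ∃ k : Fin n, z = Circle.exp (2 * π * (k : ℕ) / n)) :
    ∑ j, A i j * gd z (x j) ≥
      ∑ j, A i j * gd (x i) (x j)
        + cl / 2 * ∑ j, (gd (x i) (x j) - gd z (x j)) ^ 2 := by
  haveI : NeZero n := ⟨i.pos.ne'⟩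
  obtain ⟨σ, hσ⟩ := hx
  obtain ⟨k, hk⟩ := hz
  set a : Fin n → ℝ := fun j => gd (x i) (x j) with ha
  set b : Fin n → ℝ := fun j => gd z (x j) with hb
  have hnR : (n : ℝ) ≠ 0 := Nat.cast_ne_zero.mpr (NeZero.ne n)
  -- the permutation matching distances
  set τ : Equiv.Perm (Fin n) := σ.trans ((Equiv.addRight (k - σ i)).trans σ.symm) with hτdef
  have hτ : ∀ j, σ (τ j) = σ j + (k - σ i) := by
    intro j; simp [hτdef]
  have key : ∀ j, b (τ j) = a j := by
    intro j
    obtain ⟨m₁, hm₁⟩ := fin_val_add_int n (σ j) (k - σ i)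
    obtain ⟨m₂, hm₂⟩ := fin_val_sub_int n k (σ i)
    have hst : ((σ (τ j) : Fin n) : ℤ) = (σ j : ℤ) + k - σ i + n * (m₁ + m₂) := by
      rw [hτ j, hm₁, hm₂]; ring
    have hstR : ((σ (τ j) : ℕ) : ℝ) = ((σ j : ℕ) : ℝ) + (k : ℕ) - ((σ i : ℕ) : ℝ)
        + n * ((m₁ : ℝ) + m₂) := by
      exact_mod_cast congrArg (fun t : ℤ => (t : ℝ)) hst
    have harg : 2 * π * (k : ℕ) / n - 2 * π * ((σ (τ j) : ℕ) : ℝ) / n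
        = (2 * π * ((σ i : ℕ) : ℝ) / n - 2 * π * ((σ j : ℕ) : ℝ) / n) + 2 * π * (-(m₁ + m₂) : ℤ) := by
      rw [hstR]
      push_cast
      field_simp
      ring
    simp only [hb, ha, hσ, hk]
    rw [gd_exp, gd_exp, harg, arg_exp_add_int]
  have hbsymm : ∀ j, b j = a (τ.symm j) := by
    intro j
    rw [← key (τ.symm j), Equiv.apply_symm_apply]
  -- bounds on a
  have ha_nonneg : ∀ j, 0 ≤ a j := fun j => abs_nonneg _
  have ha_le_pi : ∀ j, a j ≤ π := by
    intro j
    rw [ha]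
    exact abs_le.mpr ⟨(Complex.neg_pi_lt_arg _).le, Complex.arg_le_pi _⟩
  -- rearrangement
  set f : Fin n → ℝ := fun j => h (a j) + cl * a j with hf
  have hanti : Antivary f a := by
    intro p q hpq
    have := hlip (a p) (a q) (ha_nonneg p) hpq.le (ha_le_pi q)
    simp only [hf]
    nlinarith
  have rearr : ∑ j, f j * a j ≤ ∑ j, f j * a (τ.symm j) := by
    have := hanti.sum_smul_le_sum_smul_comp_perm (σ := τ.symm)
    simpa [smul_eq_mul] using this
  have rearr' : ∑ j, f j * a j ≤ ∑ j, f j * b j := by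
    calc ∑ j, f j * a j ≤ ∑ j, f j * a (τ.symm j) := rearr
      _ = ∑ j, f j * b j := by simp_rw [← hbsymm]
  -- sums of squares are equal
  have hsq : ∑ j, b j ^ 2 = ∑ j, a j ^ 2 := by
    simp_rw [hbsymm]
    exact Equiv.sum_comp τ.symm (fun j => a j ^ 2)
  -- expand everything
  have e1 : ∑ j, (a j - b j) ^ 2
      = ∑ j, a j ^ 2 + ∑ j, b j ^ 2 - 2 * ∑ j, a j * b j := by
    rw [← Finset.sum_add_distrib, Finset.mul_sum, ← Finset.sum_sub_distrib]
    exact Finset.sum_congr rfl fun j _ => by ring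
  have e2 : ∑ j, f j * a j = ∑ j, h (a j) * a j + cl * ∑ j, a j ^ 2 := by
    rw [Finset.mul_sum, ← Finset.sum_add_distrib]
    exact Finset.sum_congr rfl fun j _ => by simp [hf]; ring
  have e3 : ∑ j, f j * b j = ∑ j, h (a j) * b j + cl * ∑ j, a j * b j := by
    rw [Finset.mul_sum, ← Finset.sum_add_distrib]
    exact Finset.sum_congr rfl fun j _ => by simp [hf]; ring
  have hAa : ∀ j, A i j = h (a j) := fun j => hA i j
  simp only [← ha, ← hb, hAa]
  rw [e2, e3] at rearr'
  rw [e1] at *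
  nlinarith [hsq]
end
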